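/- (Sturm comparison of logarithmic derivatives) Let Q₁, Q₂ : ℝ → ℝ be continuous with Q₁(s) ≥ Q₂(s) for all s ≥ a. Let y₁ solve y'' + Q₁·y = 0 and y₂ solve y'' + Q₂·y = 0, with y₁(s) ≠ 0 and y₂(s) ≠ 0 on (a, ∞). If y₁'(a)/y₁(a) ≤ y₂'(a)/y₂(a), then y₁'(s)/y₁(s) ≤ y₂'(s)/y₂(s) for all s > a. -/

import Mathlib

/-!
The Wronskian `W = y₁ y₂' - y₁' y₂` satisfies `W' = (Q₁ - Q₂) y₁ y₂`, and `W / (y₁ y₂)` is the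
difference of the logarithmic derivatives. Since `y₁ y₂` keeps the sign of `c = y₁(a) y₂(a)` on
`[a, ∞)`, the function `c W` is nondecreasing there and starts at `c² (y₂'/y₂ - y₁'/y₁)(a) ≥ 0`;
dividing by `c y₁ y₂ > 0` gives the comparison at every `s > a`.
-/

open Set

lemma ContinuousOn.mul_pos_of_ne_zero_on_Icc {f : ℝ → ℝ} {a b : ℝ} (hab : a ≤ b)
    (hf : ContinuousOn f (Icc a b)) (hne : ∀ t ∈ Icc a b, f t ≠ 0) : 0 < f a * f b := by
  have ha := hne a (left_mem_Icc.mpr hab)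
  have hb := hne b (right_mem_Icc.mpr hab)
  rcases ha.lt_or_gt with ha | ha <;> rcases hb.lt_or_gt with hb | hb
  · exact mul_pos_of_neg_of_neg ha hb
  · obtain ⟨t, ht, hft⟩ := intermediate_value_Icc hab hf ⟨ha.le, hb.le⟩
    exact absurd hft (hne t ht)
  · obtain ⟨t, ht, hft⟩ := intermediate_value_Icc' hab hf ⟨hb.le, ha.le⟩
    exact absurd hft (hne t ht)
  · exact mul_pos ha hb

noncomputable def wronskian (y₁ y₂ : ℝ → ℝ) (s : ℝ) : ℝ :=
  y₁ s * deriv y₂ s - deriv y₁ s * y₂ s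

lemma wronskian_div_mul_eq_sub {y₁ y₂ : ℝ → ℝ} {s : ℝ} (h₁ : y₁ s ≠ 0) (h₂ : y₂ s ≠ 0) :
    wronskian y₁ y₂ s / (y₁ s * y₂ s) = deriv y₂ s / y₂ s - deriv y₁ s / y₁ s := by
  rw [wronskian]
  field_simp

lemma hasDerivAt_wronskian {y₁ y₂ : ℝ → ℝ} {q₁ q₂ s : ℝ}
    (hy₁ : DifferentiableAt ℝ y₁ s) (hy₁' : DifferentiableAt ℝ (deriv y₁) s)
    (hy₂ : DifferentiableAt ℝ y₂ s) (hy₂' : DifferentiableAt ℝ (deriv y₂) s)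
    (hode₁ : deriv (deriv y₁) s + q₁ * y₁ s = 0) (hode₂ : deriv (deriv y₂) s + q₂ * y₂ s = 0) :
    HasDerivAt (wronskian y₁ y₂) ((q₁ - q₂) * (y₁ s * y₂ s)) s := by
  have hW := (hy₁.hasDerivAt.mul hy₂'.hasDerivAt).sub (hy₁'.hasDerivAt.mul hy₂.hasDerivAt)
  exact hW.congr_deriv (by linear_combination y₁ s * hode₂ - y₂ s * hode₁)

lemma monotoneOn_const_mul_wronskian {y₁ y₂ Q₁ Q₂ : ℝ → ℝ} {a b c : ℝ}
    (hW : ∀ t, HasDerivAt (wronskian y₁ y₂) ((Q₁ t - Q₂ t) * (y₁ t * y₂ t)) t)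
    (hQ : ∀ t ∈ Icc a b, Q₂ t ≤ Q₁ t) (hpos : ∀ t ∈ Icc a b, 0 < c * (y₁ t * y₂ t)) :
    MonotoneOn (fun t ↦ c * wronskian y₁ y₂ t) (Icc a b) := by
  have hcW : ∀ t, HasDerivAt (fun t ↦ c * wronskian y₁ y₂ t)
      (c * ((Q₁ t - Q₂ t) * (y₁ t * y₂ t))) t := fun t ↦ (hW t).const_mul c
  refine monotoneOn_of_deriv_nonneg (convex_Icc a b)
    (fun t _ ↦ (hcW t).continuousAt.continuousWithinAt)
    (fun t _ ↦ (hcW t).differentiableAt.differentiableWithinAt) fun t ht ↦ ?_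
  rw [interior_Icc] at ht
  rw [(hcW t).deriv, mul_left_comm]
  exact mul_nonneg (sub_nonneg.mpr (hQ t (Ioo_subset_Icc_self ht)))
    (hpos t (Ioo_subset_Icc_self ht)).le

theorem sturm_comparison_log_deriv_general (Q₁ Q₂ y₁ y₂ : ℝ → ℝ) (a : ℝ)
    (hQ : ∀ s, a ≤ s → Q₂ s ≤ Q₁ s)
    (hy₁ : Differentiable ℝ y₁) (hy₁' : Differentiable ℝ (deriv y₁))
    (hy₂ : Differentiable ℝ y₂) (hy₂' : Differentiable ℝ (deriv y₂))
    (hode₁ : ∀ s, deriv (deriv y₁) s + Q₁ s * y₁ s = 0)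
    (hode₂ : ∀ s, deriv (deriv y₂) s + Q₂ s * y₂ s = 0)
    (hne₁ : ∀ s ∈ Set.Ioi a, y₁ s ≠ 0) (hne₂ : ∀ s ∈ Set.Ioi a, y₂ s ≠ 0)
    (ha : y₁ a ≠ 0) (hb : y₂ a ≠ 0)
    (hinit : deriv y₁ a / y₁ a ≤ deriv y₂ a / y₂ a) :
    ∀ s, a < s → deriv y₁ s / y₁ s ≤ deriv y₂ s / y₂ s := by
  intro s has
  have ha_mem : a ∈ Icc a s := left_mem_Icc.mpr has.le
  have hs_mem : s ∈ Icc a s := right_mem_Icc.mpr has.le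
  set p : ℝ → ℝ := fun t ↦ y₁ t * y₂ t
  have hp_ne : ∀ t ∈ Icc a s, p t ≠ 0 := by
    rintro t ⟨hat, -⟩
    rcases hat.eq_or_lt with rfl | hat
    · exact mul_ne_zero ha hb
    · exact mul_ne_zero (hne₁ t hat) (hne₂ t hat)
  have hp_pos : ∀ t ∈ Icc a s, 0 < p a * p t := fun t ht ↦
    ContinuousOn.mul_pos_of_ne_zero_on_Icc ht.1 (hy₁.continuous.mul hy₂.continuous).continuousOn
      fun u hu ↦ hp_ne u ⟨hu.1, hu.2.trans ht.2⟩
  have hmono : MonotoneOn (fun t ↦ p a * wronskian y₁ y₂ t) (Icc a s) :=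
    monotoneOn_const_mul_wronskian (fun t ↦ hasDerivAt_wronskian (hy₁ t) (hy₁' t) (hy₂ t)
      (hy₂' t) (hode₁ t) (hode₂ t)) (fun t ht ↦ hQ t ht.1) hp_pos
  have hstart : 0 ≤ p a * wronskian y₁ y₂ a := by
    rw [← div_mul_cancel₀ (wronskian y₁ y₂ a) (hp_ne a ha_mem),
      wronskian_div_mul_eq_sub ha hb]
    nlinarith [mul_self_nonneg (p a)]
  have hend : 0 ≤ p a * wronskian y₁ y₂ s / (p a * p s) :=
    div_nonneg (hstart.trans (hmono ha_mem hs_mem has.le)) (hp_pos s hs_mem).le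
  rw [mul_div_mul_left _ _ (hp_ne a ha_mem),
    wronskian_div_mul_eq_sub (hne₁ s has) (hne₂ s has)] at hend
  linarith

/-- Sturm comparison of logarithmic derivatives. -/
theorem sturm_comparison_log_deriv (Q₁ Q₂ y₁ y₂ : ℝ → ℝ) (a : ℝ)
    (hQ₁ : Continuous Q₁) (hQ₂ : Continuous Q₂)
    (hQ : ∀ s, a ≤ s → Q₂ s ≤ Q₁ s)
    (hy₁ : Differentiable ℝ y₁) (hy₁' : Differentiable ℝ (deriv y₁))
    (hy₂ : Differentiable ℝ y₂) (hy₂' : Differentiable ℝ (deriv y₂))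
    (hode₁ : ∀ s, deriv (deriv y₁) s + Q₁ s * y₁ s = 0)
    (hode₂ : ∀ s, deriv (deriv y₂) s + Q₂ s * y₂ s = 0)
    (hne₁ : ∀ s ∈ Set.Ioi a, y₁ s ≠ 0) (hne₂ : ∀ s ∈ Set.Ioi a, y₂ s ≠ 0)
    (ha : y₁ a ≠ 0) (hb : y₂ a ≠ 0)
    (hinit : deriv y₁ a / y₁ a ≤ deriv y₂ a / y₂ a) :
    ∀ s, a < s → deriv y₁ s / y₁ s ≤ deriv y₂ s / y₂ s :=
  sturm_comparison_log_deriv_general Q₁ Q₂ y₁ y₂ a hQ hy₁ hy₁' hy₂ hy₂' hode₁ hode₂ hne₁ hne₂ ha hb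
    hinit
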